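/- Let M¹,...,M^k ∈ ℝ^{n×n} be rescaled Toeplitz matrices and p : ℝ → ℝ a polynomial of degree d̃. Then the matrix M with entries M_{i,j} = p(Σ_{ℓ=1}^k M^ℓ_{i,j}) can be written as a linear combination M = Σ_{m ∈ 𝓜} α_m N^{(m)} of rescaled Toeplitz matrices N^{(m)}, where N^{(m)}_{i,j} = ∏_{ℓ=1}^k (M^ℓ_{i,j})^{m(ℓ)} and 𝓜 = {m : [k] → ℕ : Σ_ℓ m(ℓ) ≤ d̃}. -/
import Mathlib

open Matrix Finset

/-- An `n × n` real matrix is Toeplitz if its `(i,j)` entry depends only on `i - j`. -/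
def IsToeplitz {n : ℕ} (T : Matrix (Fin n) (Fin n) ℝ) : Prop :=
  ∃ a : ℤ → ℝ, ∀ i j : Fin n, T i j = a ((i : ℤ) - (j : ℤ))

/-- A matrix is rescaled Toeplitz if it is `D₁ C D₂` with `D₁, D₂` diagonal and `C` Toeplitz. -/
def IsRescaledToeplitz {n : ℕ} (M : Matrix (Fin n) (Fin n) ℝ) : Prop :=
  ∃ (d₁ d₂ : Fin n → ℝ) (C : Matrix (Fin n) (Fin n) ℝ),
    IsToeplitz C ∧ M = Matrix.diagonal d₁ * C * Matrix.diagonal d₂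

lemma filter_eq_biUnion (k d : ℕ) :
    (Fintype.piFinset fun _ : Fin k => Finset.range (d + 1)).filter
        (fun m => ∑ l : Fin k, m l ≤ d) =
      (Finset.range (d + 1)).biUnion
        (fun t => Finset.piAntidiag (Finset.univ : Finset (Fin k)) t) := by
  ext m
  simp only [mem_filter, Fintype.mem_piFinset, mem_range, mem_biUnion, mem_piAntidiag]
  constructor
  · rintro ⟨_, hs⟩
    exact ⟨∑ l, m l, Nat.lt_succ_of_le hs, rfl, fun i _ => mem_univ i⟩
  · rintro ⟨t, ht, rfl, -⟩
    refine ⟨fun l => ?_, Nat.lt_succ_iff.mp ht⟩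
    exact lt_of_le_of_lt (Finset.single_le_sum (fun i _ => Nat.zero_le _) (mem_univ l)) ht

/-- a degree-`d̃` polynomial applied entry-wise to a sum of rescaled
Toeplitz matrices is a linear combination, over `𝓜 = {m : [k] → ℕ : Σ m(ℓ) ≤ d̃}`, of
the rescaled Toeplitz matrices `N^{(m)}` with `N^{(m)}_{i,j} = ∏_ℓ (M^ℓ_{i,j})^{m(ℓ)}`. -/
theorem polynomial_of_sum_rescaledToeplitz (n k d : ℕ)
    (M : Fin k → Matrix (Fin n) (Fin n) ℝ)
    (hM : ∀ l : Fin k, IsRescaledToeplitz (M l))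
    (p : Polynomial ℝ) (hp : p.natDegree ≤ d) :
    ∃ α : (Fin k → ℕ) → ℝ,
      (Matrix.of fun i j : Fin n => p.eval (∑ l : Fin k, M l i j)) =
        ∑ m ∈ (Fintype.piFinset fun _ : Fin k => Finset.range (d + 1)).filter
            (fun m => ∑ l : Fin k, m l ≤ d),
          α m • (Matrix.of fun i j : Fin n => ∏ l : Fin k, (M l i j) ^ (m l)) ∧
      ∀ m : Fin k → ℕ, (∑ l : Fin k, m l ≤ d) →
        IsRescaledToeplitz (Matrix.of fun i j : Fin n => ∏ l : Fin k, (M l i j) ^ (m l)) := by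
  refine ⟨fun m => p.coeff (∑ l, m l) * Nat.multinomial Finset.univ m, ?_, ?_⟩
  · ext i j
    have hdisj : (↑(Finset.range (d + 1)) : Set ℕ).PairwiseDisjoint
        (fun t => Finset.piAntidiag (Finset.univ : Finset (Fin k)) t) := by
      intro t₁ _ t₂ _ hne
      simp only [Finset.disjoint_left, mem_piAntidiag]
      rintro m ⟨rfl, -⟩ ⟨h2, -⟩
      exact hne h2
    rw [filter_eq_biUnion, Finset.sum_biUnion hdisj]
    simp only [Matrix.sum_apply, Matrix.smul_apply, Matrix.of_apply, smul_eq_mul]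
    rw [Polynomial.eval_eq_sum_range' (Nat.lt_succ_of_le hp)]
    refine Finset.sum_congr rfl fun t _ => ?_
    rw [Finset.sum_pow_eq_sum_piAntidiag, Finset.mul_sum]
    refine Finset.sum_congr rfl fun m hm => ?_
    rw [Finset.mem_piAntidiag] at hm
    rw [hm.1]
    ring
  · intro m _
    choose d₁ d₂ C hC hMC using hM
    choose a ha using hC
    refine ⟨fun i => ∏ l, d₁ l i ^ m l, fun j => ∏ l, d₂ l j ^ m l,
      Matrix.of fun i j => ∏ l, a l ((i : ℤ) - (j : ℤ)) ^ m l,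
      ⟨fun z => ∏ l, a l z ^ m l, fun i j => rfl⟩, ?_⟩
    ext i j
    have hentry : ∀ l, M l i j = d₁ l i * C l i j * d₂ l j := by
      intro l
      rw [hMC l]
      simp [Matrix.mul_apply, Matrix.diagonal, Finset.sum_ite_eq, Finset.sum_ite_eq']
    simp only [Matrix.mul_apply, Matrix.diagonal, Matrix.of_apply]
    rw [Finset.sum_eq_single j, Finset.sum_eq_single i] <;>
      try (intro b _ hb; simp [hb, Ne.symm hb])
    · simp only [if_pos rfl, if_true]
      rw [← Finset.prod_mul_distrib, ← Finset.prod_mul_distrib]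
      refine Finset.prod_congr rfl fun l _ => ?_
      rw [hentry l, ha l]
      ring
    · intro h; exact absurd (Finset.mem_univ i) h
    · intro h; exact absurd (Finset.mem_univ j) h
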